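/- Let N = pq with p, q odd primes such that ν₂(p−1) ≠ ν₂(q−1). Let a ∈ ℤ with gcd(a, N) = 1 and (a|N)_2 = 1, and set v := ν₂(N−1). Then a is a quadratic residue modulo N (i.e. there exists x ∈ ℤ with x² ≡ a (mod N)) if and only if (a^{2^v}|N)_{2^{v+1}} = 1. -/

import Mathlib

/- The rational `2^k`-th power residue symbol `(a|p)_{2^k}` for a prime `p`. -/
open Classical in
noncomputable def rps (k p : ℕ) (a : ℤ) : ℤ :=
  if ∃ x : ℤ, x ^ (2 ^ k) ≡ a [ZMOD (p : ℤ)] then 1 else -1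

/- The rational `2^k`-th power residue symbol `(a|n)_{2^k}` for composite `n`. -/
noncomputable def rpsN (k n : ℕ) (a : ℤ) : ℤ :=
  (n.primeFactorsList.map fun p => rps k p a).prod

lemma rps_eq_one_iff (k p : ℕ) (a : ℤ) :
    rps k p a = 1 ↔ ∃ x : ℤ, x ^ (2 ^ k) ≡ a [ZMOD (p : ℤ)] := by
  unfold rps; split <;> simp_all

lemma rps_eq_one_or (k p : ℕ) (a : ℤ) : rps k p a = 1 ∨ rps k p a = -1 := by
  unfold rps; split <;> simp

lemma modEq_zmod_iff (n e : ℕ) (a : ℤ) :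
    (∃ x : ℤ, x ^ e ≡ a [ZMOD (n : ℤ)]) ↔ ∃ y : ZMod n, y ^ e = (a : ZMod n) := by
  constructor
  · rintro ⟨x, hx⟩
    refine ⟨(x : ZMod n), ?_⟩
    have := (ZMod.intCast_eq_intCast_iff _ _ _).mpr hx
    push_cast at this ⊢
    exact this
  · rintro ⟨y, hy⟩
    obtain ⟨x, rfl⟩ := ZMod.intCast_surjective y
    refine ⟨x, (ZMod.intCast_eq_intCast_iff _ _ _).mp ?_⟩
    push_cast
    exact hy

lemma rpsN_mul_primes {p q : ℕ} (hp : p.Prime) (hq : q.Prime) (k : ℕ) (a : ℤ) :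
    rpsN k (p * q) a = rps k p a * rps k q a := by
  unfold rpsN
  have hperm := (Nat.perm_primeFactorsList_mul hp.ne_zero hq.ne_zero).map
    (fun r => rps k r a)
  rw [hperm.prod_eq]
  simp [Nat.primeFactorsList_prime hp, Nat.primeFactorsList_prime hq]

lemma exists_pow_eq_of_odd_order {M : Type*} [Monoid M] {b : M} {m : ℕ} (n : ℕ)
    (hcop : Nat.Coprime n m) (hb : b ^ m = 1) (hm0 : m ≠ 0) : ∃ x : M, x ^ n = b := by
  rcases eq_or_ne m 1 with rfl | hm1
  · exact ⟨1, by rw [one_pow, ← hb, pow_one]⟩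
  · obtain ⟨e, -, he⟩ := Nat.exists_mul_mod_eq_one_of_coprime hcop (by omega)
    obtain ⟨t, ht⟩ : ∃ t, n * e = m * t + 1 := by
      refine ⟨n * e / m, ?_⟩
      have := Nat.div_add_mod (n * e) m
      omega
    refine ⟨b ^ e, ?_⟩
    calc (b ^ e) ^ n = b ^ (n * e) := by rw [← pow_mul, mul_comm]
      _ = b ^ (m * t + 1) := by rw [ht]
      _ = (b ^ m) ^ t * b := by rw [pow_add, pow_mul, pow_one]
      _ = b := by rw [hb, one_pow, one_mul]

set_option maxHeartbeats 1000000 in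
lemma key (p q : ℕ) (hp : p.Prime) (hq : q.Prime)
    (hpo : Odd p) (hqo : Odd q)
    (hlt : padicValNat 2 (p - 1) < padicValNat 2 (q - 1))
    (a : ℤ) (ha : Int.gcd a ((p : ℤ) * q) = 1)
    (hjac : rps 1 p a * rps 1 q a = 1) :
    (∃ x : ℤ, x ^ 2 ≡ a [ZMOD ((p : ℤ) * q)]) ↔
      rps (padicValNat 2 (p * q - 1) + 1) p (a ^ 2 ^ padicValNat 2 (p * q - 1)) *
      rps (padicValNat 2 (p * q - 1) + 1) q (a ^ 2 ^ padicValNat 2 (p * q - 1)) = 1 := by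
  haveI : Fact p.Prime := ⟨hp⟩
  haveI : Fact q.Prime := ⟨hq⟩
  haveI : Fact (Nat.Prime 2) := ⟨Nat.prime_two⟩
  set α := padicValNat 2 (p - 1) with hαdef
  set β := padicValNat 2 (q - 1) with hβdef
  have hp2 : p ≠ 2 := by rintro rfl; exact absurd hpo (by decide)
  have hq2 : q ≠ 2 := by rintro rfl; exact absurd hqo (by decide)
  have hp3 : 3 ≤ p := by have := hp.two_le; omega
  have hq3 : 3 ≤ q := by have := hq.two_le; omega
  have hp1 : p - 1 ≠ 0 := by omega
  have hq1 : q - 1 ≠ 0 := by omega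
  -- basic 2-adic facts
  have hA : 2 ^ α ∣ p - 1 := pow_padicValNat_dvd
  have hA' : ¬ 2 ^ (α + 1) ∣ p - 1 := pow_succ_padicValNat_not_dvd hp1
  have hB : 2 ^ β ∣ q - 1 := pow_padicValNat_dvd
  have hB1 : 2 ^ (α + 1) ∣ q - 1 := dvd_trans (pow_dvd_pow 2 hlt) hB
  have hNsub : p * q - 1 = (p - 1) * q + (q - 1) := by
    have h1 : (p - 1) * q = p * q - q := Nat.sub_one_mul p q
    have h2 : q ≤ p * q := Nat.le_mul_of_pos_left q hp.pos
    omega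
  have hNne : p * q - 1 ≠ 0 := by
    have := Nat.mul_le_mul hp.two_le hq.two_le
    omega
  have hvd : 2 ^ α ∣ p * q - 1 := by
    rw [hNsub]
    exact dvd_add (hA.mul_right q) (dvd_trans (pow_dvd_pow 2 hlt.le) hB)
  have hnd : ¬ 2 ^ (α + 1) ∣ p * q - 1 := by
    intro h
    rw [hNsub] at h
    have h2 : 2 ^ (α + 1) ∣ (p - 1) * q := by
      have := Nat.dvd_sub h hB1
      rwa [Nat.add_sub_cancel] at this
    have hcop2q : Nat.Coprime (2 ^ (α + 1)) q :=
      Nat.Coprime.pow_left _ (Nat.coprime_two_left.mpr hqo)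
    exact hA' (hcop2q.dvd_of_dvd_mul_right h2)
  have hv : padicValNat 2 (p * q - 1) = α := by
    have h1 : α ≤ padicValNat 2 (p * q - 1) := (padicValNat_dvd_iff_le hNne).mp hvd
    have h2 : ¬ (α + 1 ≤ padicValNat 2 (p * q - 1)) := fun h =>
      hnd ((padicValNat_dvd_iff_le hNne).mpr h)
    omega
  rw [hv]
  -- odd parts
  obtain ⟨m, hm⟩ := hA
  have hmodd : Odd m := by
    rcases Nat.even_or_odd m with he | ho
    · obtain ⟨m', rfl⟩ := he
      exact absurd ⟨m', by rw [hm]; ring⟩ hA'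
    · exact ho
  have hm0 : m ≠ 0 := by rintro rfl; simp at hm; omega
  obtain ⟨c, hc⟩ := hB1
  -- a is nonzero mod p and mod q
  have hnz : ∀ r : ℕ, r.Prime → (r : ℤ) ∣ (p : ℤ) * q → (a : ZMod r) ≠ 0 := by
    intro r hr hrd
    rw [Ne, ZMod.intCast_zmod_eq_zero_iff_dvd]
    intro hd
    have h2 : (r : ℤ) ∣ ((Int.gcd a ((p : ℤ) * q) : ℕ) : ℤ) := Int.dvd_coe_gcd hd hrd
    rw [ha] at h2
    have h3 : (r : ℤ) ≤ 1 := Int.le_of_dvd one_pos (by exact_mod_cast h2)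
    have := hr.two_le
    omega
  have hap : (a : ZMod p) ≠ 0 := hnz p hp (dvd_mul_right _ _)
  have haq : (a : ZMod q) ≠ 0 := hnz q hq (dvd_mul_left _ _)
  -- quadratic residue predicates
  have hSp_iff : rps 1 p a = 1 ↔ ∃ y : ZMod p, y ^ 2 = (a : ZMod p) := by
    rw [rps_eq_one_iff, modEq_zmod_iff]; norm_num
  have hSq_iff : rps 1 q a = 1 ↔ ∃ y : ZMod q, y ^ 2 = (a : ZMod q) := by
    rw [rps_eq_one_iff, modEq_zmod_iff]; norm_num
  have hjac' : (rps 1 p a = 1) ↔ (rps 1 q a = 1) := by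
    rcases rps_eq_one_or 1 p a with h1 | h1 <;> rcases rps_eq_one_or 1 q a with h2 | h2 <;>
      rw [h1, h2] at hjac ⊢ <;> norm_num at hjac
  -- Claim 1 : the symbol at p is always 1
  have hClaim1 : rps (α + 1) p (a ^ 2 ^ α) = 1 := by
    rw [rps_eq_one_iff, modEq_zmod_iff]
    have hcast : ((a ^ 2 ^ α : ℤ) : ZMod p) = (a : ZMod p) ^ 2 ^ α := by push_cast; ring
    rw [hcast]
    refine exists_pow_eq_of_odd_order _ (Nat.Coprime.pow_left _
      (Nat.coprime_two_left.mpr hmodd)) ?_ hm0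
    rw [← pow_mul, ← hm, ZMod.pow_card_sub_one_eq_one hap]
  -- Claim 2 : the symbol at q detects squares
  have hClaim2 : rps (α + 1) q (a ^ 2 ^ α) = 1 ↔ ∃ y : ZMod q, y ^ 2 = (a : ZMod q) := by
    rw [rps_eq_one_iff, modEq_zmod_iff]
    have hcast : ((a ^ 2 ^ α : ℤ) : ZMod q) = (a : ZMod q) ^ 2 ^ α := by push_cast; ring
    rw [hcast]
    constructor
    · rintro ⟨y, hy⟩
      have hyne : y ≠ 0 := by
        rintro rfl
        rw [zero_pow (by positivity)] at hy
        exact haq (pow_eq_zero_iff (by positivity) |>.mp hy.symm)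
      have heuler := ZMod.euler_criterion q haq
      have hq2' : q / 2 = 2 ^ α * c := by
        have hc' : q - 1 = 2 * (2 ^ α * c) := by rw [hc]; ring
        omega
      have hpow : (a : ZMod q) ^ (q / 2) = 1 := by
        rw [hq2', pow_mul, ← hy, ← pow_mul, ← hc, ZMod.pow_card_sub_one_eq_one hyne]
      obtain ⟨r, hr⟩ := heuler.mpr hpow
      exact ⟨r, by rw [pow_two, ← hr]⟩
    · rintro ⟨z, hz⟩
      refine ⟨z, ?_⟩
      have h21 : (2:ℕ) ^ (α + 1) = 2 * 2 ^ α := by rw [pow_succ]; ring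
      rw [h21, pow_mul, hz]
  -- CRT
  have hpq : p ≠ q := by
    rintro rfl
    rw [hαdef, hβdef] at hlt
    exact lt_irrefl _ hlt
  have hcop : Nat.Coprime p q := (Nat.coprime_primes hp hq).mpr hpq
  have hCRT : (∃ x : ℤ, x ^ 2 ≡ a [ZMOD ((p : ℤ) * q)]) ↔
      (∃ y : ZMod p, y ^ 2 = (a : ZMod p)) ∧ (∃ y : ZMod q, y ^ 2 = (a : ZMod q)) := by
    rw [show ((p : ℤ) * q) = ((p * q : ℕ) : ℤ) from (Nat.cast_mul p q).symm, modEq_zmod_iff]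
    set e := ZMod.chineseRemainder hcop with hedef
    constructor
    · rintro ⟨y, hy⟩
      have h1 := congrArg e hy
      rw [map_pow, map_intCast] at h1
      constructor
      · exact ⟨(e y).1, by have := congrArg Prod.fst h1; simpa using this⟩
      · exact ⟨(e y).2, by have := congrArg Prod.snd h1; simpa using this⟩
    · rintro ⟨⟨y1, h1⟩, ⟨y2, h2⟩⟩
      refine ⟨e.symm (y1, y2), ?_⟩
      have : ((y1, y2) : ZMod p × ZMod q) ^ 2 = ((a : ℤ) : ZMod p × ZMod q) := by
        rw [Prod.pow_mk]
        ext <;> simp [h1, h2]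
      calc (e.symm (y1, y2)) ^ 2 = e.symm ((y1, y2) ^ 2) := (map_pow e.symm _ 2).symm
        _ = e.symm ((a : ℤ) : ZMod p × ZMod q) := by rw [this]
        _ = ((a : ℤ) : ZMod (p * q)) := map_intCast _ _
  rw [hCRT, hClaim1, one_mul, hClaim2, ← hSq_iff, ← hSp_iff, hjac']
  tauto

theorem statement16 (p q : ℕ) (hp : p.Prime) (hq : q.Prime)
    (hpo : Odd p) (hqo : Odd q)
    (hne : padicValNat 2 (p - 1) ≠ padicValNat 2 (q - 1))
    (a : ℤ) (ha : Int.gcd a ((p : ℤ) * q) = 1)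
    (hjac : rpsN 1 (p * q) a = 1) :
    (∃ x : ℤ, x ^ 2 ≡ a [ZMOD ((p : ℤ) * q)]) ↔
      rpsN (padicValNat 2 (p * q - 1) + 1) (p * q)
        (a ^ 2 ^ padicValNat 2 (p * q - 1)) = 1 := by
  rw [rpsN_mul_primes hp hq] at hjac ⊢
  rcases hne.lt_or_gt with h | h
  · exact key p q hp hq hpo hqo h a ha hjac
  · have hcomm : p * q = q * p := mul_comm p q
    have hcommZ : (p : ℤ) * q = (q : ℤ) * p := mul_comm _ _
    rw [hcomm, hcommZ, mul_comm (rps _ p _)]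
    rw [hcommZ] at ha
    rw [mul_comm (rps 1 p a)] at hjac
    exact key q p hq hp hqo hpo h a ha hjac
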